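/- arXiv:2510.17536 — 3 statements merged into one kernel-verified Lean document; each statement's English description precedes it below -/
import Mathlib

section
/- Let Γ ⊂ ℝⁿ be an open convex cone with vertex at the origin containing the positive orthant. If A and B are real symmetric n×n matrices such that the eigenvalue vector of A lies in the translated set δ·(1,…,1) + Γ for some δ > 0, and B ≥ −δ·I as quadratic forms, then the eigenvalue vector of A + B lies in Γ. -/
/-!
An open convex cone containing the positive orthant is an upper set: if `x ∈ Γ` and `x ≤ y`,
openness gives `x - ε·(1,…,1) ∈ Γ`, and `y` is the sum of that point and a vector of the positive
orthant. So it suffices that `λ(A) - δ ≤ λ(A + B)` coordinatewise. This is Weyl's monotonicity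
principle for decreasingly ordered eigenvalues, proved by the Courant–Fischer argument: a nonzero
`x` in the span of the top `k + 1` eigenvectors of `A` and orthogonal to the top `k` eigenvectors
of `A + B` satisfies `(λₖ(A) - δ) ‖x‖² ≤ ⟪(A + B) x, x⟫ ≤ λₖ(A + B) ‖x‖²`.
-/

open Filter Topology Module RCLike
open scoped InnerProductSpace ComplexOrder

theorem IsOpen.exists_pos_sub_smul_mem {E : Type*} [AddCommGroup E] [Module ℝ E]
    [TopologicalSpace E] [ContinuousSub E] [ContinuousSMul ℝ E] {U : Set E}
    (hU : IsOpen U) {x : E} (hx : x ∈ U) (v : E) : ∃ ε : ℝ, 0 < ε ∧ x - ε • v ∈ U := by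
  have hcont : Continuous fun t : ℝ => x - t • v := by fun_prop
  have hnhds : ∀ᶠ t in 𝓝 (0 : ℝ), x - t • v ∈ U :=
    hcont.continuousAt.eventually_mem (by simpa using hU.mem_nhds hx)
  obtain ⟨ε, hεU, hε⟩ := ((hnhds.filter_mono nhdsWithin_le_nhds).and self_mem_nhdsWithin :
    ∀ᶠ t in 𝓝[>] (0 : ℝ), x - t • v ∈ U ∧ 0 < t).exists
  exact ⟨ε, hε, hεU⟩

theorem Convex.add_mem_of_smul_mem {E : Type*} [AddCommGroup E] [Module ℝ E] {C : Set E}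
    (hconv : Convex ℝ C) (hcone : ∀ t : ℝ, 0 < t → ∀ x ∈ C, t • x ∈ C) {x y : E}
    (hx : x ∈ C) (hy : y ∈ C) : x + y ∈ C := by
  have hmid : (1 / 2 : ℝ) • x + (1 / 2 : ℝ) • y ∈ C :=
    hconv hx hy (by norm_num) (by norm_num) (by norm_num)
  convert hcone 2 two_pos _ hmid using 1
  rw [smul_add, smul_smul, smul_smul]
  norm_num

theorem isUpperSet_of_isOpen_convex_cone {ι : Type*} [Fintype ι] {Γ : Set (ι → ℝ)}
    (hopen : IsOpen Γ) (hconv : Convex ℝ Γ) (hcone : ∀ t : ℝ, 0 < t → ∀ x ∈ Γ, t • x ∈ Γ)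
    (horthant : ∀ x : ι → ℝ, (∀ i, 0 < x i) → x ∈ Γ) : IsUpperSet Γ := by
  intro x y hxy hx
  obtain ⟨ε, hε, hxε⟩ := hopen.exists_pos_sub_smul_mem hx 1
  have hpos : y - (x - ε • 1) ∈ Γ := horthant _ fun i => by
    simp only [Pi.sub_apply, Pi.smul_apply, Pi.one_apply, smul_eq_mul, mul_one]
    linarith [hxy i]
  simpa using hconv.add_mem_of_smul_mem hcone hxε hpos

section

variable {𝕜 E : Type*} [RCLike 𝕜] [NormedAddCommGroup E] [InnerProductSpace 𝕜 E]

theorem exists_ne_zero_inner_eq_zero [FiniteDimensional 𝕜 E] {n : ℕ} (hn : finrank 𝕜 E = n)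
    (b b' : Fin n → E) (k : Fin n) :
    ∃ x ≠ 0, (∀ i, k < i → ⟪b i, x⟫_𝕜 = 0) ∧ ∀ j, j < k → ⟪b' j, x⟫_𝕜 = 0 := by
  let f : E →ₗ[𝕜] (Set.Ioi k → 𝕜) × (Set.Iio k → 𝕜) :=
    (LinearMap.pi fun i : Set.Ioi k => innerₛₗ 𝕜 (b i)).prod
      (LinearMap.pi fun j : Set.Iio k => innerₛₗ 𝕜 (b' j))
  have hdim : finrank 𝕜 ((Set.Ioi k → 𝕜) × (Set.Iio k → 𝕜)) < finrank 𝕜 E := by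
    simp only [finrank_prod, finrank_fintype_fun_eq_card, Finset.mem_Ioi, Set.mem_Ioi,
      implies_true, Fintype.card_ofFinset, Fin.card_Ioi, Finset.mem_Iio, Set.mem_Iio,
      Fin.card_Iio, hn]
    omega
  obtain ⟨x, hx, hx0⟩ :=
    Submodule.exists_mem_ne_zero_of_ne_bot (LinearMap.ker_ne_bot_of_finrank_lt (f := f) hdim)
  simp only [f, LinearMap.ker_prod, Submodule.mem_inf, LinearMap.mem_ker, funext_iff,
    LinearMap.pi_apply, innerₛₗ_apply_apply, Pi.zero_apply, Subtype.forall, Set.mem_Ioi,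
    Set.mem_Iio] at hx
  exact ⟨x, hx0, hx⟩

namespace LinearMap.IsSymmetric

variable [FiniteDimensional 𝕜 E] {T : E →ₗ[𝕜] E} {n : ℕ} (hT : T.IsSymmetric)
  (hn : finrank 𝕜 E = n)

theorem re_inner_apply_self_eq_sum (x : E) :
    re ⟪T x, x⟫_𝕜 = ∑ i, hT.eigenvalues hn i * ‖⟪hT.eigenvectorBasis hn i, x⟫_𝕜‖ ^ 2 := by
  set b := hT.eigenvectorBasis hn
  rw [← b.repr.inner_map_map, PiLp.inner_apply, map_sum]
  refine Finset.sum_congr rfl fun i _ => ?_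
  rw [hT.eigenvectorBasis_apply_self_apply, b.repr_apply_apply, RCLike.inner_apply,
    map_mul (starRingEnd 𝕜), RCLike.conj_ofReal, mul_left_comm, RCLike.mul_conj]
  norm_cast

theorem le_re_inner_apply_self {μ : ℝ} {x : E}
    (hx : ∀ i, ⟪hT.eigenvectorBasis hn i, x⟫_𝕜 ≠ 0 → μ ≤ hT.eigenvalues hn i) :
    μ * ‖x‖ ^ 2 ≤ re ⟪T x, x⟫_𝕜 := by
  rw [hT.re_inner_apply_self_eq_sum hn, ← (hT.eigenvectorBasis hn).sum_sq_norm_inner_right,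
    Finset.mul_sum]
  refine Finset.sum_le_sum fun i _ => ?_
  by_cases h : ⟪hT.eigenvectorBasis hn i, x⟫_𝕜 = 0
  · simp [h]
  · exact mul_le_mul_of_nonneg_right (hx i h) (sq_nonneg _)

theorem re_inner_apply_self_le {μ : ℝ} {x : E}
    (hx : ∀ i, ⟪hT.eigenvectorBasis hn i, x⟫_𝕜 ≠ 0 → hT.eigenvalues hn i ≤ μ) :
    re ⟪T x, x⟫_𝕜 ≤ μ * ‖x‖ ^ 2 := by
  rw [hT.re_inner_apply_self_eq_sum hn, ← (hT.eigenvectorBasis hn).sum_sq_norm_inner_right,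
    Finset.mul_sum]
  refine Finset.sum_le_sum fun i _ => ?_
  by_cases h : ⟪hT.eigenvectorBasis hn i, x⟫_𝕜 = 0
  · simp [h]
  · exact mul_le_mul_of_nonneg_right (hx i h) (sq_nonneg _)

theorem eigenvalues_add_le_eigenvalues {S : E →ₗ[𝕜] E} (hS : S.IsSymmetric) {c : ℝ}
    (hTS : ∀ x, re ⟪T x, x⟫_𝕜 + c * ‖x‖ ^ 2 ≤ re ⟪S x, x⟫_𝕜) (k : Fin n) :
    hT.eigenvalues hn k + c ≤ hS.eigenvalues hn k := by
  obtain ⟨x, hx0, hxT, hxS⟩ :=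
    exists_ne_zero_inner_eq_zero hn (hT.eigenvectorBasis hn) (hS.eigenvectorBasis hn) k
  have hT_ge : hT.eigenvalues hn k * ‖x‖ ^ 2 ≤ re ⟪T x, x⟫_𝕜 :=
    hT.le_re_inner_apply_self hn fun i hi =>
      hT.eigenvalues_antitone hn (not_lt.mp fun hki => hi (hxT i hki))
  have hS_le : re ⟪S x, x⟫_𝕜 ≤ hS.eigenvalues hn k * ‖x‖ ^ 2 :=
    hS.re_inner_apply_self_le hn fun j hj =>
      hS.eigenvalues_antitone hn (not_lt.mp fun hjk => hj (hxS j hjk))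
  have hx : 0 < ‖x‖ ^ 2 := by positivity
  refine le_of_mul_le_mul_right ?_ hx
  linarith [hTS x, add_mul (hT.eigenvalues hn k) c (‖x‖ ^ 2)]

end LinearMap.IsSymmetric

namespace Matrix.IsHermitian

variable {m : Type*} [Fintype m] [DecidableEq m] {A B : Matrix m m 𝕜}

theorem eigenvalues_sub_le_eigenvalues_add (hA : A.IsHermitian) (hB : B.IsHermitian) {δ : ℝ}
    (hBδ : (B + δ • (1 : Matrix m m 𝕜)).PosSemidef) (i : m) :
    hA.eigenvalues i - δ ≤ (hA.add hB).eigenvalues i := by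
  have hquad (x : EuclideanSpace 𝕜 m) :
      re ⟪toEuclideanLin A x, x⟫_𝕜 + -δ * ‖x‖ ^ 2 ≤ re ⟪toEuclideanLin (A + B) x, x⟫_𝕜 := by
    have h := (isPositive_toEuclideanLin_iff.mpr hBδ).2 x
    rw [RCLike.real_smul_eq_coe_smul (K := 𝕜)] at h
    simp only [map_add, map_smul, LinearMap.add_apply, LinearMap.smul_apply, inner_add_left,
      toLpLin_one, LinearMap.id_apply, inner_smul_real_left, RCLike.smul_re,
      inner_self_eq_norm_sq] at h ⊢
    linarith
  -- `eigenvalues` reindexes the ordered `eigenvalues₀` along one `Fintype.equivOfCardEq` shared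
  -- by all matrices over `m`, so the comparison of ordered eigenvalues holds index by index.
  unfold eigenvalues eigenvalues₀
  rw [sub_eq_add_neg]
  exact (isSymmetric_toEuclideanLin_iff.mpr hA).eigenvalues_add_le_eigenvalues
    finrank_euclideanSpace (isSymmetric_toEuclideanLin_iff.mpr (hA.add hB)) hquad _

end Matrix.IsHermitian

end

theorem eigenvalues_add_mem_cone_general
    (n : ℕ) (Γ : Set (Fin n → ℝ))
    (hopen : IsOpen Γ)
    (hconv : Convex ℝ Γ)
    (hcone : ∀ (t : ℝ), 0 < t → ∀ x ∈ Γ, t • x ∈ Γ)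
    (horthant : ∀ x : Fin n → ℝ, (∀ i, 0 < x i) → x ∈ Γ)
    (A B : Matrix (Fin n) (Fin n) ℝ)
    (hA : A.IsHermitian) (hB : B.IsHermitian)
    (δ : ℝ)
    (hAin : (fun i => hA.eigenvalues i - δ) ∈ Γ)
    (hBge : (B + δ • (1 : Matrix (Fin n) (Fin n) ℝ)).PosSemidef) :
    (fun i => (hA.add hB).eigenvalues i) ∈ Γ :=
  isUpperSet_of_isOpen_convex_cone hopen hconv hcone horthant
    (hA.eigenvalues_sub_le_eigenvalues_add hB hBge) hAin

/-- If `Γ ⊂ ℝⁿ` is an open convex cone (symmetric under coordinate permutations)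
containing the positive orthant, `A`, `B` are symmetric matrices with
`λ(A) ∈ δ·(1,…,1) + Γ` and `B ≥ −δ·I`, then `λ(A + B) ∈ Γ`. -/
theorem eigenvalues_add_mem_cone
    (n : ℕ) (Γ : Set (Fin n → ℝ))
    (hopen : IsOpen Γ)
    (hsym : ∀ (σ : Equiv.Perm (Fin n)) (x : Fin n → ℝ), x ∈ Γ → (x ∘ σ) ∈ Γ)
    (hconv : Convex ℝ Γ)
    (hcone : ∀ (t : ℝ), 0 < t → ∀ x ∈ Γ, t • x ∈ Γ)
    (horthant : ∀ x : Fin n → ℝ, (∀ i, 0 < x i) → x ∈ Γ)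
    (A B : Matrix (Fin n) (Fin n) ℝ)
    (hA : A.IsHermitian) (hB : B.IsHermitian)
    (δ : ℝ) (hδ : 0 < δ)
    (hAin : (fun i => hA.eigenvalues i - δ) ∈ Γ)
    (hBge : (B + δ • (1 : Matrix (Fin n) (Fin n) ℝ)).PosSemidef) :
    (fun i => (hA.add hB).eigenvalues i) ∈ Γ :=
  eigenvalues_add_mem_cone_general n Γ hopen hconv hcone horthant A B hA hB δ hAin hBge
end

section
/- Let A be a real symmetric n×n matrix (n ≥ 2) whose eigenvalues λ₁, …, λₙ satisfy λᵢ + λⱼ > 0 for all i ≠ j. Then for every pair of orthonormal vectors u, v ∈ ℝⁿ one has ⟨Au, u⟩ + ⟨Av, v⟩ > 0. -/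
open scoped Matrix

open Finset in
/-- If `A` is a real symmetric `n×n` matrix (`n ≥ 2`) whose eigenvalues satisfy
`λᵢ + λⱼ > 0` for all `i ≠ j`, then for every pair of orthonormal vectors
`u, v ∈ ℝⁿ` one has `⟨Au, u⟩ + ⟨Av, v⟩ > 0`. -/
theorem quadratic_form_sum_pos_of_pairwise_eigenvalue_sums_pos
    (n : ℕ) (hn : 2 ≤ n)
    (A : Matrix (Fin n) (Fin n) ℝ) (hA : A.IsHermitian)
    (heig : ∀ i j : Fin n, i ≠ j → 0 < hA.eigenvalues i + hA.eigenvalues j)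
    (u v : Fin n → ℝ)
    (hu : u ⬝ᵥ u = 1) (hv : v ⬝ᵥ v = 1) (huv : u ⬝ᵥ v = 0) :
    0 < (A *ᵥ u) ⬝ᵥ u + (A *ᵥ v) ⬝ᵥ v := by
  set lam : Fin n → ℝ := hA.eigenvalues with hlam
  set U : Matrix (Fin n) (Fin n) ℝ := (hA.eigenvectorUnitary : Matrix (Fin n) (Fin n) ℝ)
    with hUdef
  have hst : star U = Uᵀ := by
    ext i j
    simp [Matrix.star_apply]
  have hUU : U * Uᵀ = 1 := by
    rw [← hst]
    exact (Matrix.mem_unitaryGroup_iff).mp hA.eigenvectorUnitary.2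
  have hUtU : Uᵀ * U = 1 := by
    rw [← hst]
    exact (Matrix.mem_unitaryGroup_iff').mp hA.eigenvectorUnitary.2
  -- orthogonality preservation
  have hpres : ∀ a b : Fin n → ℝ, (Uᵀ *ᵥ a) ⬝ᵥ (Uᵀ *ᵥ b) = a ⬝ᵥ b := by
    intro a b
    rw [Matrix.mulVec_transpose, ← Matrix.dotProduct_mulVec, Matrix.mulVec_mulVec, hUU,
      Matrix.one_mulVec]
  -- quadratic form as eigenvalue-weighted sum
  have hquad : ∀ a : Fin n → ℝ, (A *ᵥ a) ⬝ᵥ a = ∑ k, lam k * ((Uᵀ *ᵥ a) k) ^ 2 := by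
    intro a
    have hAeq : A = U * Matrix.diagonal lam * Uᵀ := by
      rw [← hst]
      simpa using hA.spectral_theorem
    rw [hAeq, ← Matrix.mulVec_mulVec, ← Matrix.mulVec_mulVec, dotProduct_comm,
      Matrix.dotProduct_mulVec, ← Matrix.mulVec_transpose]
    simp only [dotProduct, Matrix.mulVec_diagonal]
    exact Finset.sum_congr rfl fun k _ => by ring
  set x : Fin n → ℝ := Uᵀ *ᵥ u with hx
  set y : Fin n → ℝ := Uᵀ *ᵥ v with hy
  have hxx : x ⬝ᵥ x = 1 := by rw [hx, hpres, hu]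
  have hyy : y ⬝ᵥ y = 1 := by rw [hy, hpres, hv]
  have hxy : x ⬝ᵥ y = 0 := by rw [hx, hy, hpres, huv]
  set w : Fin n → ℝ := fun k => x k ^ 2 + y k ^ 2 with hw
  have hw0 : ∀ k, 0 ≤ w k := fun k => by positivity
  have hwsum : ∑ k, w k = 2 := by
    have h1 : ∑ k, x k ^ 2 = 1 := by
      simpa [dotProduct, sq] using hxx
    have h2 : ∑ k, y k ^ 2 = 1 := by
      simpa [dotProduct, sq] using hyy
    rw [hw]
    rw [Finset.sum_add_distrib, h1, h2]
    norm_num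
  have hw1 : ∀ k, w k ≤ 1 := by
    intro k
    set z : Fin n → ℝ := fun j => x k * x j + y k * y j with hz
    have hzz : z ⬝ᵥ z = w k := by
      have hxx' : ∑ j, x j * x j = 1 := hxx
      have hyy' : ∑ j, y j * y j = 1 := hyy
      have hxy' : ∑ j, x j * y j = 0 := hxy
      have expand : (z ⬝ᵥ z) = x k ^ 2 * (∑ j, x j * x j)
          + (2 * (x k * y k)) * (∑ j, x j * y j) + y k ^ 2 * (∑ j, y j * y j) := by
        simp only [dotProduct, hz, Finset.mul_sum, ← Finset.sum_add_distrib]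
        exact Finset.sum_congr rfl fun j _ => by ring
      rw [expand, hxx', hyy', hxy']
      ring
    have hzk : z k = w k := by simp [hz, hw, sq]
    have hge : z k ^ 2 ≤ z ⬝ᵥ z := by
      have : z ⬝ᵥ z = ∑ j, z j ^ 2 := by
        simp [dotProduct, sq]
      rw [this]
      exact Finset.single_le_sum (f := fun j => z j ^ 2) (fun j _ => by positivity)
        (Finset.mem_univ k)
    rw [hzk, hzz] at hge
    nlinarith [hw0 k]
  -- choose minimal and second-minimal eigenvalues
  obtain ⟨i0, -, hi0⟩ := Finset.exists_min_image Finset.univ lam ⟨⟨0, by omega⟩, Finset.mem_univ _⟩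
  have hne : (Finset.univ.erase i0).Nonempty := by
    have hcard : (Finset.univ.erase i0).card = n - 1 := by
      rw [Finset.card_erase_of_mem (Finset.mem_univ i0), Finset.card_univ, Fintype.card_fin]
    rw [← Finset.card_pos, hcard]
    omega
  obtain ⟨j0, hj0mem, hj0⟩ := Finset.exists_min_image (Finset.univ.erase i0) lam hne
  have hj0ne : j0 ≠ i0 := (Finset.mem_erase.mp hj0mem).1
  have hmin : lam i0 ≤ lam j0 := hi0 j0 (Finset.mem_univ j0)
  have hpos : 0 < lam i0 + lam j0 := by
    have := heig j0 i0 hj0ne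
    linarith
  -- putting it together
  rw [hquad u, hquad v, ← hx, ← hy]
  have hsum_eq : ∑ k, lam k * (x k) ^ 2 + ∑ k, lam k * (y k) ^ 2 = ∑ k, lam k * w k := by
    rw [← Finset.sum_add_distrib]
    exact Finset.sum_congr rfl fun k _ => by rw [hw]; ring
  rw [hsum_eq]
  have hsplit : ∑ k, lam k * w k = lam i0 * w i0 + ∑ k ∈ Finset.univ.erase i0, lam k * w k := by
    rw [← Finset.add_sum_erase _ _ (Finset.mem_univ i0)]
  have hbound : ∑ k ∈ Finset.univ.erase i0, lam j0 * w k
      ≤ ∑ k ∈ Finset.univ.erase i0, lam k * w k := by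
    refine Finset.sum_le_sum fun k hk => ?_
    exact mul_le_mul_of_nonneg_right (hj0 k hk) (hw0 k)
  have herase_sum : ∑ k ∈ Finset.univ.erase i0, w k = 2 - w i0 := by
    have := Finset.add_sum_erase Finset.univ w (Finset.mem_univ i0)
    rw [hwsum] at this
    linarith
  have hconst : ∑ k ∈ Finset.univ.erase i0, lam j0 * w k = lam j0 * (2 - w i0) := by
    rw [← Finset.mul_sum, herase_sum]
  rw [hsplit]
  have hwi0 : w i0 ≤ 1 := hw1 i0
  have hwi0' : 0 ≤ w i0 := hw0 i0
  nlinarith [hbound, hconst]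
end

section
/- Let Γ ⊂ ℝⁿ be an open symmetric convex cone with vertex at the origin containing the positive orthant, and suppose (α,…,α,α−β) ∈ Γ for real constants α, β. Let p ∈ ℝⁿ be nonzero and let B be a symmetric n×n matrix with operator norm ‖B‖ ≤ ε₀ |p|², where ε₀ > 0 is small enough that (α−2ε₀,…,α−2ε₀,α−β−2ε₀) ∈ Γ. Then the eigenvalue vector of α|p|²·I − β·p pᵀ + B lies in Γ. -/
open scoped Matrix

/-!
Write `P = |p|²`. The quadratic form of `M` is at least `(α - ε₀) P |v|² - β (p ⬝ v)²`.
On the hyperplane `p⊥` this exceeds `(α - 2ε₀) P |v|²`, so (min–max) at most one eigenvalue is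
`≤ (α - 2ε₀) P`; at `v = p` it exceeds `(α - β - 2ε₀) P |p|²`, so some eigenvalue exceeds
`(α - β - 2ε₀) P`; and at a unit eigenvector it shows, by Cauchy–Schwarz, that every eigenvalue
exceeds the smaller of these two thresholds. Hence the eigenvalue vector strictly dominates, entry
by entry, a permutation of `P • (α - 2ε₀, …, α - 2ε₀, α - β - 2ε₀) ∈ Γ`, and a convex cone
containing the positive orthant is closed under strict increases.
-/

lemma Convex.mem_of_forall_lt_of_mem {ι : Type*} {Γ : Set (ι → ℝ)} (hconv : Convex ℝ Γ)
    (hcone : ∀ t : ℝ, 0 < t → ∀ x ∈ Γ, t • x ∈ Γ)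
    (horthant : ∀ x : ι → ℝ, (∀ i, 0 < x i) → x ∈ Γ)
    {x y : ι → ℝ} (hx : x ∈ Γ) (hxy : ∀ i, x i < y i) : y ∈ Γ := by
  have hmid := hconv hx (horthant (y - x) fun i => sub_pos.mpr (hxy i))
    (by norm_num : (0 : ℝ) ≤ 1 / 2) (by norm_num : (0 : ℝ) ≤ 1 / 2) (by norm_num)
  convert hcone 2 two_pos _ hmid using 1
  ext i
  simp only [Pi.smul_apply, Pi.add_apply, Pi.sub_apply, smul_eq_mul]
  ring

lemma exists_lt_and_forall_ne_lt {α ι : Type*} [LinearOrder α] (f : ι → α) {c c' : α}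
    (hmin : ∀ i, min c c' < f i) (hunique : ∀ i j, f i ≤ c → f j ≤ c → i = j)
    (hmax : ∃ j, c' < f j) : ∃ j, c' < f j ∧ ∀ i, i ≠ j → c < f i := by
  by_cases hlow : ∃ j, f j ≤ c
  · obtain ⟨j, hj⟩ := hlow
    refine ⟨j, ?_, fun i hij => lt_of_not_ge fun hi => hij (hunique i j hi hj)⟩
    simpa [hj.not_gt] using hmin j
  · simp only [not_exists, not_le] at hlow
    obtain ⟨j, hj⟩ := hmax
    exact ⟨j, hj, fun i _ => hlow i⟩

namespace Matrix

variable {ι : Type*} [Fintype ι]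

lemma dotProduct_self_pos {v : ι → ℝ} (hv : v ≠ 0) : 0 < v ⬝ᵥ v := by
  simpa using dotProduct_star_self_pos_iff.mpr hv

lemma exists_smul_add_smul_dotProduct_eq_zero {R : Type*} [CommRing R] [Nontrivial R]
    (p u v : ι → R) : ∃ a b : R, (a ≠ 0 ∨ b ≠ 0) ∧ p ⬝ᵥ (a • u + b • v) = 0 := by
  rcases eq_or_ne (p ⬝ᵥ u) 0 with hu | hu
  · exact ⟨1, 0, Or.inl one_ne_zero, by simp [hu]⟩
  · refine ⟨p ⬝ᵥ v, -(p ⬝ᵥ u), Or.inr (neg_ne_zero.mpr hu), ?_⟩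
    simp only [dotProduct_add, dotProduct_smul, smul_eq_mul]
    ring

variable [DecidableEq ι]

lemma le_dotProduct_mulVec_of_posSemidef_add_smul_one {a e β : ℝ} {p : ι → ℝ}
    {B : Matrix ι ι ℝ} (hB : (B + e • 1).PosSemidef) (v : ι → ℝ) :
    (a - e) * (v ⬝ᵥ v) - β * (p ⬝ᵥ v) ^ 2 ≤ v ⬝ᵥ ((a • 1 - β • vecMulVec p p + B) *ᵥ v) := by
  have hBv := hB.dotProduct_mulVec_nonneg v
  simp only [star_trivial, add_mulVec, smul_mulVec, one_mulVec, dotProduct_add,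
    dotProduct_smul, smul_eq_mul] at hBv
  simp only [add_mulVec, sub_mulVec, smul_mulVec, one_mulVec, vecMulVec_mulVec, dotProduct_add,
    dotProduct_sub, dotProduct_smul, smul_eq_mul, MulOpposite.smul_eq_mul_unop,
    MulOpposite.unop_op, dotProduct_comm v p]
  nlinarith

namespace IsHermitian

variable {M : Matrix ι ι ℝ} (hM : M.IsHermitian)

local notation "U" => (hM.eigenvectorUnitary : Matrix ι ι ℝ)

lemma eigenvectorUnitary_mulVec_dotProduct (q r : ι → ℝ) :
    (U *ᵥ q) ⬝ᵥ (U *ᵥ r) = q ⬝ᵥ r := by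
  have hUU : Uᵀ * U = 1 := by
    simpa [star_eq_conjTranspose] using Unitary.coe_star_mul_self hM.eigenvectorUnitary
  rw [dotProduct_mulVec, vecMul_mulVec, hUU, vecMul_one]

lemma mulVec_eigenvectorUnitary_mulVec (q : ι → ℝ) :
    M *ᵥ (U *ᵥ q) = U *ᵥ (diagonal hM.eigenvalues *ᵥ q) := by
  have hMU : M * U = U * diagonal hM.eigenvalues := by
    rw [congrArg (· * U) hM.spectral_theorem, Unitary.conjStarAlgAut_apply, Matrix.mul_assoc,
      Unitary.coe_star_mul_self, Matrix.mul_one]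
    rfl
  rw [mulVec_mulVec, hMU, ← mulVec_mulVec]

lemma eigenvectorUnitary_mulVec_dotProduct_mulVec (q : ι → ℝ) :
    (U *ᵥ q) ⬝ᵥ (M *ᵥ (U *ᵥ q)) = ∑ k, hM.eigenvalues k * q k ^ 2 := by
  rw [mulVec_eigenvectorUnitary_mulVec, eigenvectorUnitary_mulVec_dotProduct]
  simp only [dotProduct, mulVec_diagonal]
  exact Finset.sum_congr rfl fun k _ => by ring

lemma eigenvectorUnitary_mulVec_dotProduct_mulVec_le {c : ℝ} (q : ι → ℝ)
    (hq : ∀ k, q k ≠ 0 → hM.eigenvalues k ≤ c) :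
    (U *ᵥ q) ⬝ᵥ (M *ᵥ (U *ᵥ q)) ≤ c * ((U *ᵥ q) ⬝ᵥ (U *ᵥ q)) := by
  rw [eigenvectorUnitary_mulVec_dotProduct_mulVec, eigenvectorUnitary_mulVec_dotProduct,
    dotProduct, Finset.mul_sum]
  refine Finset.sum_le_sum fun k _ => ?_
  rcases eq_or_ne (q k) 0 with h | h
  · simp [h]
  · nlinarith [hq k h, sq_nonneg (q k)]

lemma lt_eigenvalues_of_forall_lt {c : ℝ} (h : ∀ v, v ⬝ᵥ v = 1 → c < v ⬝ᵥ (M *ᵥ v)) (i : ι) :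
    c < hM.eigenvalues i := by
  have hv := h (U *ᵥ Pi.single i 1) (by
    rw [eigenvectorUnitary_mulVec_dotProduct, single_dotProduct, one_mul, Pi.single_eq_same])
  rwa [eigenvectorUnitary_mulVec_dotProduct_mulVec, Finset.sum_eq_single i (fun k _ hk => by
    simp [hk]) (by simp), Pi.single_eq_same, one_pow, mul_one] at hv

lemma exists_lt_eigenvalues_of_lt {c : ℝ} {w : ι → ℝ} (hw : c * (w ⬝ᵥ w) < w ⬝ᵥ (M *ᵥ w)) :
    ∃ j, c < hM.eigenvalues j := by
  by_contra! hle
  have hUw : U *ᵥ (star U *ᵥ w) = w := by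
    rw [mulVec_mulVec, Unitary.mul_star_self_of_mem hM.eigenvectorUnitary.prop, one_mulVec]
  have := hM.eigenvectorUnitary_mulVec_dotProduct_mulVec_le (star U *ᵥ w) fun k _ => hle k
  rw [hUw] at this
  linarith

/-- Min–max in its simplest form: the eigenvectors of two eigenvalues `≤ c` span a plane,
which meets the hyperplane `p⊥` nontrivially. -/
lemma eq_of_eigenvalues_le {c : ℝ} (p : ι → ℝ)
    (h : ∀ w, w ≠ 0 → p ⬝ᵥ w = 0 → c * (w ⬝ᵥ w) < w ⬝ᵥ (M *ᵥ w)) {i j : ι}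
    (hi : hM.eigenvalues i ≤ c) (hj : hM.eigenvalues j ≤ c) : i = j := by
  by_contra hij
  obtain ⟨a, b, hab, hp⟩ := exists_smul_add_smul_dotProduct_eq_zero p
    (U *ᵥ Pi.single i 1) (U *ᵥ Pi.single j 1)
  set q : ι → ℝ := a • Pi.single i 1 + b • Pi.single j 1
  have hUq : U *ᵥ q = a • (U *ᵥ Pi.single i 1) + b • (U *ᵥ Pi.single j 1) := by
    simp only [q, mulVec_add, mulVec_smul]
  have hq : q ≠ 0 := by
    rcases hab with ha | hb
    · exact fun h0 => ha (by simpa [q, Ne.symm hij] using congrFun h0 i)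
    · exact fun h0 => hb (by simpa [q, hij] using congrFun h0 j)
  have hw : U *ᵥ q ≠ 0 := fun h0 => hq <| dotProduct_self_eq_zero.mp <| by
    rw [← eigenvectorUnitary_mulVec_dotProduct hM, h0, zero_dotProduct]
  have hsupp : ∀ k, q k ≠ 0 → hM.eigenvalues k ≤ c := fun k hk => by
    by_cases hki : k = i
    · exact hki ▸ hi
    by_cases hkj : k = j
    · exact hkj ▸ hj
    simp [q, hki, hkj] at hk
  have := h _ hw (hUq ▸ hp)
  linarith [hM.eigenvectorUnitary_mulVec_dotProduct_mulVec_le q hsupp]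

theorem exists_eigenvalues_gt_of_perturbation {α β ε : ℝ} {p : ι → ℝ} (hp : p ≠ 0)
    (hε : 0 < ε) {B : Matrix ι ι ℝ} (hB : (B + (ε * (p ⬝ᵥ p)) • 1).PosSemidef)
    (hMdef : M = (α * (p ⬝ᵥ p)) • 1 - β • vecMulVec p p + B) :
    ∃ j, (α - β - 2 * ε) * (p ⬝ᵥ p) < hM.eigenvalues j ∧
      ∀ i, i ≠ j → (α - 2 * ε) * (p ⬝ᵥ p) < hM.eigenvalues i := by
  set P := p ⬝ᵥ p
  have hP : 0 < P := dotProduct_self_pos hp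
  have hquad : ∀ v, (α * P - ε * P) * (v ⬝ᵥ v) - β * (p ⬝ᵥ v) ^ 2 ≤ v ⬝ᵥ (M *ᵥ v) :=
    fun v => hMdef ▸ le_dotProduct_mulVec_of_posSemidef_add_smul_one hB v
  have hmin : ∀ i, min ((α - 2 * ε) * P) ((α - β - 2 * ε) * P) < hM.eigenvalues i :=
    hM.lt_eigenvalues_of_forall_lt fun v hv => by
      have hCS : (p ⬝ᵥ v) ^ 2 ≤ P * (v ⬝ᵥ v) := by
        simpa only [P, dotProduct, sq] using Finset.sum_mul_sq_le_sq_mul_sq Finset.univ p v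
      have := hquad v
      rw [hv] at hCS this
      rcases le_or_gt 0 β with hβ | hβ
      · nlinarith [min_le_right ((α - 2 * ε) * P) ((α - β - 2 * ε) * P)]
      · nlinarith [min_le_left ((α - 2 * ε) * P) ((α - β - 2 * ε) * P), sq_nonneg (p ⬝ᵥ v)]
  have hunique : ∀ i j, hM.eigenvalues i ≤ (α - 2 * ε) * P →
      hM.eigenvalues j ≤ (α - 2 * ε) * P → i = j :=
    fun i j => hM.eq_of_eigenvalues_le p fun w hw hpw => by
      have := hquad w
      rw [hpw] at this
      nlinarith [mul_pos hε (mul_pos hP (dotProduct_self_pos hw))]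
  have hmax : ∃ j, (α - β - 2 * ε) * P < hM.eigenvalues j :=
    hM.exists_lt_eigenvalues_of_lt (w := p) <| by nlinarith [hquad p, mul_pos hε (mul_pos hP hP)]
  exact exists_lt_and_forall_ne_lt _ hmin hunique hmax

end IsHermitian

end Matrix

theorem eigenvalues_perturbed_in_cone_general
    (n : ℕ) (Γ : Set (Fin n → ℝ))
    (hsym : ∀ (σ : Equiv.Perm (Fin n)) (x : Fin n → ℝ), x ∈ Γ → (x ∘ σ) ∈ Γ)
    (hconv : Convex ℝ Γ)
    (hcone : ∀ (t : ℝ), 0 < t → ∀ x ∈ Γ, t • x ∈ Γ)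
    (horthant : ∀ x : Fin n → ℝ, (∀ i, 0 < x i) → x ∈ Γ)
    (α β : ℝ)
    (p : Fin n → ℝ) (hp : p ≠ 0)
    (ε₀ : ℝ) (hε₀ : 0 < ε₀)
    (hsmall : (fun i : Fin n =>
        if (i : ℕ) = n - 1 then α - β - 2 * ε₀ else α - 2 * ε₀) ∈ Γ)
    (B : Matrix (Fin n) (Fin n) ℝ)
    (hBlb : (B + (ε₀ * (p ⬝ᵥ p)) • (1 : Matrix (Fin n) (Fin n) ℝ)).PosSemidef)
    (M : Matrix (Fin n) (Fin n) ℝ)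
    (hMdef : M = (α * (p ⬝ᵥ p)) • (1 : Matrix (Fin n) (Fin n) ℝ)
        - β • Matrix.vecMulVec p p + B)
    (hM : M.IsHermitian) :
    (fun i => hM.eigenvalues i) ∈ Γ := by
  obtain ⟨j, hj, hother⟩ := hM.exists_eigenvalues_gt_of_perturbation hp hε₀ hBlb hMdef
  let last : Fin n := ⟨n - 1, by have := j.isLt; omega⟩
  have hswap : ∀ i, ((Equiv.swap j last i : ℕ) = n - 1 ↔ i = j) := fun i => by
    change (_ : ℕ) = last ↔ _
    rw [Fin.val_inj, Equiv.swap_apply_eq_iff, Equiv.swap_apply_right]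
  refine hconv.mem_of_forall_lt_of_mem hcone horthant
    (hcone _ (Matrix.dotProduct_self_pos hp) _ (hsym (Equiv.swap j last) _ hsmall)) fun i => ?_
  simp only [Pi.smul_apply, Function.comp_apply, smul_eq_mul, hswap]
  split_ifs with hij
  · subst hij; linarith
  · linarith [hother i hij]

/-- Let `Γ ⊂ ℝⁿ` be an open symmetric convex cone with vertex at the origin
containing the positive orthant, with `(α,…,α,α−β) ∈ Γ`. If `p ≠ 0`, `ε₀ > 0`
is such that `(α−2ε₀,…,α−2ε₀,α−β−2ε₀) ∈ Γ`, and `B` is symmetric with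
`−ε₀|p|²·I ≤ B ≤ ε₀|p|²·I`, then the eigenvalue vector of
`α|p|²·I − β·p pᵀ + B` lies in `Γ` (here `|p|² = p ⬝ᵥ p`). -/
theorem eigenvalues_perturbed_in_cone
    (n : ℕ) (Γ : Set (Fin n → ℝ))
    (hopen : IsOpen Γ)
    (hsym : ∀ (σ : Equiv.Perm (Fin n)) (x : Fin n → ℝ), x ∈ Γ → (x ∘ σ) ∈ Γ)
    (hconv : Convex ℝ Γ)
    (hcone : ∀ (t : ℝ), 0 < t → ∀ x ∈ Γ, t • x ∈ Γ)
    (horthant : ∀ x : Fin n → ℝ, (∀ i, 0 < x i) → x ∈ Γ)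
    (α β : ℝ)
    (hαβ : (fun i : Fin n => if (i : ℕ) = n - 1 then α - β else α) ∈ Γ)
    (p : Fin n → ℝ) (hp : p ≠ 0)
    (ε₀ : ℝ) (hε₀ : 0 < ε₀)
    (hsmall : (fun i : Fin n =>
        if (i : ℕ) = n - 1 then α - β - 2 * ε₀ else α - 2 * ε₀) ∈ Γ)
    (B : Matrix (Fin n) (Fin n) ℝ) (hB : B.IsHermitian)
    (hBub : ((ε₀ * (p ⬝ᵥ p)) • (1 : Matrix (Fin n) (Fin n) ℝ) - B).PosSemidef)
    (hBlb : (B + (ε₀ * (p ⬝ᵥ p)) • (1 : Matrix (Fin n) (Fin n) ℝ)).PosSemidef)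
    (M : Matrix (Fin n) (Fin n) ℝ)
    (hMdef : M = (α * (p ⬝ᵥ p)) • (1 : Matrix (Fin n) (Fin n) ℝ)
        - β • Matrix.vecMulVec p p + B)
    (hM : M.IsHermitian) :
    (fun i => hM.eigenvalues i) ∈ Γ :=
  eigenvalues_perturbed_in_cone_general n Γ hsym hconv hcone horthant α β p hp ε₀ hε₀ hsmall B hBlb
    M hMdef hM
end
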